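/- Let u, v ∈ ℤ² be linearly independent over ℚ, and let F = {{0, u}, {0, v}} be a family of two 2-ships in ℤ². Then π(F) = 1/2. -/
import Mathlib


/-- A shooting pattern `X` hits a ship `S` in `ℤ²` if every translate of `S` intersects `X`. -/
def Hits2 (X S : Set (ℤ × ℤ)) : Prop := ∀ n : ℤ × ℤ, ∃ s ∈ S, n + s ∈ X

/-- Lower asymptotic density of a set in `ℤ²`. -/
noncomputable def lowerDensity2 (X : Set (ℤ × ℤ)) : ℝ :=
  Filter.liminf (fun N : ℕ =>
    ((X ∩ Set.Icc (-(N:ℤ), -(N:ℤ)) ((N:ℤ), (N:ℤ))).ncard : ℝ) / (2 * N + 1) ^ 2)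
    Filter.atTop

/-- Optimal piercing density of a family of ships in `ℤ²`. -/
noncomputable def piercing2 (F : Set (Set (ℤ × ℤ))) : ℝ :=
  sInf (lowerDensity2 '' {X | ∀ S ∈ F, Hits2 X S})

namespace Stmt14Aux

open Filter Set Topology

/-- The centered box of radius `K`. -/
def box (K : ℕ) : Set (ℤ × ℤ) := Set.Icc (-(K:ℤ), -(K:ℤ)) ((K:ℤ), (K:ℤ))

lemma box_finite (K : ℕ) : (box K).Finite := Set.finite_Icc _ _

lemma box_ncard (K : ℕ) : (box K).ncard = (2*K+1)^2 := by
  rw [box, ← Finset.coe_Icc, Set.ncard_coe_finset, Finset.Icc_prod_def, Finset.card_product]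
  simp only [Int.card_Icc]
  have : ((K:ℤ) + 1 - (-(K:ℤ))).toNat = 2*K+1 := by omega
  rw [this]; ring

lemma box_mono {N K : ℕ} (h : N ≤ K) : box N ⊆ box K := by
  intro x hx
  simp only [box, Set.mem_Icc, Prod.le_def] at *
  omega

lemma mem_box_add {u x : ℤ × ℤ} {N M : ℕ} (hM1 : u.1.natAbs ≤ M) (hM2 : u.2.natAbs ≤ M)
    (hx : x ∈ box N) : x + u ∈ box (N + M) := by
  simp only [box, Set.mem_Icc, Prod.le_def, Prod.fst_add, Prod.snd_add] at *
  push_cast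
  omega

lemma inter_box_finite (X : Set (ℤ × ℤ)) (K : ℕ) : (X ∩ box K).Finite :=
  (box_finite K).inter_of_right X

/-- Counting lower bound: if `X ∪ (X - u) = ℤ²`, the box of radius `N + M` contains at least
`(2N+1)²/2` points of `X`. -/
lemma count_lower (u : ℤ × ℤ) (X : Set (ℤ × ℤ)) (hX : ∀ n, n ∈ X ∨ n + u ∈ X)
    (N M : ℕ) (hM1 : u.1.natAbs ≤ M) (hM2 : u.2.natAbs ≤ M) :
    (2*N+1)^2 ≤ 2 * (X ∩ box (N+M)).ncard := by
  have hsub : box N ⊆ (X ∩ box N) ∪ ((fun x => x + u) ⁻¹' X ∩ box N) := by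
    intro x hx
    rcases hX x with h | h
    · exact Or.inl ⟨h, hx⟩
    · exact Or.inr ⟨h, hx⟩
  have h1 : (box N).ncard ≤ (X ∩ box N).ncard + ((fun x => x + u) ⁻¹' X ∩ box N).ncard := by
    refine le_trans (Set.ncard_le_ncard hsub ?_) (Set.ncard_union_le _ _)
    exact (inter_box_finite X N).union ((box_finite N).inter_of_right _)
  have h2 : (X ∩ box N).ncard ≤ (X ∩ box (N+M)).ncard :=
    Set.ncard_le_ncard (Set.inter_subset_inter_right X (box_mono (Nat.le_add_right N M)))
      (inter_box_finite X _)
  have h3 : ((fun x => x + u) ⁻¹' X ∩ box N).ncard ≤ (X ∩ box (N+M)).ncard := by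
    have himg : (fun x => x + u) '' ((fun x => x + u) ⁻¹' X ∩ box N) ⊆ X ∩ box (N+M) := by
      rintro y ⟨x, ⟨hx1, hx2⟩, rfl⟩
      exact ⟨hx1, mem_box_add hM1 hM2 hx2⟩
    calc ((fun x => x + u) ⁻¹' X ∩ box N).ncard
        = ((fun x => x + u) '' ((fun x => x + u) ⁻¹' X ∩ box N)).ncard :=
          (Set.ncard_image_of_injective _ (add_left_injective u)).symm
      _ ≤ (X ∩ box (N+M)).ncard := Set.ncard_le_ncard himg (inter_box_finite X _)
  rw [box_ncard] at h1
  omega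

/-- Counting upper bound: if `X` and `X + u` are disjoint, the box of radius `N` contains at most
`(2(N+M)+1)²/2` points of `X`. -/
lemma count_upper (u : ℤ × ℤ) (X : Set (ℤ × ℤ)) (hX : ∀ x ∈ X, x + u ∉ X)
    (N M : ℕ) (hM1 : u.1.natAbs ≤ M) (hM2 : u.2.natAbs ≤ M) :
    2 * (X ∩ box N).ncard ≤ (2*(N+M)+1)^2 := by
  have h2 : (X ∩ box N).ncard ≤ (X ∩ box (N+M)).ncard :=
    Set.ncard_le_ncard (Set.inter_subset_inter_right X (box_mono (Nat.le_add_right N M)))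
      (inter_box_finite X _)
  have h3 : (X ∩ box N).ncard ≤ (Xᶜ ∩ box (N+M)).ncard := by
    have himg : (fun x => x + u) '' (X ∩ box N) ⊆ Xᶜ ∩ box (N+M) := by
      rintro y ⟨x, ⟨hx1, hx2⟩, rfl⟩
      exact ⟨hX x hx1, mem_box_add hM1 hM2 hx2⟩
    calc (X ∩ box N).ncard
        = ((fun x => x + u) '' (X ∩ box N)).ncard :=
          (Set.ncard_image_of_injective _ (add_left_injective u)).symm
      _ ≤ (Xᶜ ∩ box (N+M)).ncard :=
          Set.ncard_le_ncard himg ((box_finite _).inter_of_right _)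
  have h4 : (X ∩ box (N+M)).ncard + (Xᶜ ∩ box (N+M)).ncard = (2*(N+M)+1)^2 := by
    rw [← box_ncard (N+M), ← Set.ncard_union_eq ?_ (inter_box_finite X _)
      ((box_finite _).inter_of_right _)]
    · rw [← Set.union_inter_distrib_right, Set.union_compl_self, Set.univ_inter]
    · exact Set.disjoint_left.mpr (fun x hx hx' => hx'.1 hx.1)
  omega

lemma tend_half (c : ℝ) :
    Tendsto (fun N : ℕ => (2*(N:ℝ)+1+c)^2 / (2*(2*(N:ℝ)+1)^2)) atTop (𝓝 (1/2)) := by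
  have h1 : Tendsto (fun N : ℕ => (2*(N:ℝ)+1)) atTop atTop := by
    apply tendsto_atTop_add_const_right
    exact Tendsto.const_mul_atTop two_pos tendsto_natCast_atTop_atTop
  have h2 : Tendsto (fun N : ℕ => c / (2*(N:ℝ)+1)) atTop (𝓝 0) :=
    Tendsto.div_atTop tendsto_const_nhds h1
  have h3 : ∀ N : ℕ, (2*(N:ℝ)+1+c)^2 / (2*(2*(N:ℝ)+1)^2) = (1 + c/(2*(N:ℝ)+1))^2 / 2 := by
    intro N
    have hne : (2*(N:ℝ)+1) ≠ 0 := by positivity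
    have h : 1 + c/(2*(N:ℝ)+1) = (2*(N:ℝ)+1+c)/(2*(N:ℝ)+1) := by field_simp
    rw [h, div_pow, div_div, mul_comm ((2*(N:ℝ)+1)^2) 2]
  have h4 : Tendsto (fun N : ℕ => (1 + c/(2*(N:ℝ)+1))^2 / 2) atTop (𝓝 ((1+0)^2/2)) :=
    ((tendsto_const_nhds.add h2).pow 2).div_const 2
  simp only [h3]
  simpa using h4

end Stmt14Aux

open Filter Set Topology Stmt14Aux in
theorem stmt14 (u v : ℤ × ℤ) (hind : ∀ m n : ℤ, m • u + n • v = 0 → m = 0 ∧ n = 0) :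
    piercing2 {{0, u}, {0, v}} = 1 / 2 := by
  classical
  set P : Set (Set (ℤ × ℤ)) := {X | ∀ S ∈ ({{0, u}, {0, v}} : Set (Set (ℤ × ℤ))), Hits2 X S}
    with hP
  set M : ℕ := max u.1.natAbs u.2.natAbs with hM
  have hM1 : u.1.natAbs ≤ M := le_max_left _ _
  have hM2 : u.2.natAbs ≤ M := le_max_right _ _
  -- notation for the density sequence
  have hdens : ∀ X : Set (ℤ × ℤ), lowerDensity2 X =
      liminf (fun N : ℕ => ((X ∩ box N).ncard : ℝ) / (2 * N + 1) ^ 2) atTop := by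
    intro X; rfl
  have hbox_pos : ∀ N : ℕ, (0:ℝ) < (2 * (N:ℝ) + 1) ^ 2 := by
    intro N; positivity
  have hle1 : ∀ (X : Set (ℤ × ℤ)) (N : ℕ),
      ((X ∩ box N).ncard : ℝ) / (2 * N + 1) ^ 2 ≤ 1 := by
    intro X N
    rw [div_le_one (hbox_pos N)]
    have h1 : (X ∩ box N).ncard ≤ (2*N+1)^2 := by
      rw [← box_ncard N]
      exact Set.ncard_le_ncard Set.inter_subset_right (box_finite N)
    calc ((X ∩ box N).ncard : ℝ) ≤ (((2*N+1)^2 : ℕ) : ℝ) := by exact_mod_cast h1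
      _ = (2 * (N:ℝ) + 1)^2 := by push_cast; ring
  -- Lower bound: every hitting pattern has lower density ≥ 1/2
  have ld_ge : ∀ X ∈ P, 1/2 ≤ lowerDensity2 X := by
    intro X hXP
    have hu : Hits2 X {0, u} := hXP _ (Set.mem_insert _ _)
    have hor : ∀ n, n ∈ X ∨ n + u ∈ X := by
      intro n
      rcases hu n with ⟨s, hs, hmem⟩
      rcases hs with rfl | rfl
      · left; simpa using hmem
      · right; exact hmem
    set f : ℕ → ℝ := fun N => ((X ∩ box N).ncard : ℝ) / (2 * N + 1) ^ 2 with hf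
    set g : ℕ → ℝ := fun N => (2*(N:ℝ)+1+(-(2*(M:ℝ))))^2 / (2*(2*(N:ℝ)+1)^2) with hg
    have hgt : Tendsto g atTop (𝓝 (1/2)) := tend_half _
    have hev : ∀ᶠ N in atTop, g N ≤ f N := by
      rw [eventually_atTop]
      refine ⟨M, fun N hN => ?_⟩
      have hcount := count_lower u X hor (N - M) M hM1 hM2
      rw [Nat.sub_add_cancel hN] at hcount
      have hcast : ((2*(N-M)+1)^2 : ℝ) ≤ 2 * ((X ∩ box N).ncard : ℝ) := by
        exact_mod_cast hcount
      have hsub : ((N - M : ℕ) : ℝ) = (N:ℝ) - (M:ℝ) := by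
        push_cast [Nat.cast_sub hN]; ring
      have hkey : (2*(N:ℝ)+1+(-(2*(M:ℝ))))^2 ≤ 2 * ((X ∩ box N).ncard : ℝ) := by
        have : (2*(N:ℝ)+1+(-(2*(M:ℝ)))) = 2*((N-M:ℕ):ℝ)+1 := by rw [hsub]; ring
        rw [this]
        exact_mod_cast hcast
      have hpos := hbox_pos N
      rw [hg, hf, div_le_div_iff₀ (by positivity) hpos]
      nlinarith [hkey, sq_nonneg (2*(N:ℝ)+1)]
    rw [hdens X, ← hgt.liminf_eq]
    exact Filter.liminf_le_liminf hev hgt.isBoundedUnder_ge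
      (Filter.isCoboundedUnder_ge_of_le atTop (fun N => hle1 X N))
  -- Construction of an optimal pattern
  have hcomp : ∀ m n : ℤ, m*u.1 + n*v.1 = 0 → m*u.2 + n*v.2 = 0 → m = 0 ∧ n = 0 := by
    intro m n h1 h2
    refine hind m n ?_
    rw [Prod.ext_iff]
    constructor
    · simpa using h1
    · simpa using h2
  set D : ℤ := u.1 * v.2 - u.2 * v.1 with hDdef
  have hD0 : D ≠ 0 := by
    intro h
    rw [hDdef] at h
    obtain ⟨hv2, hu2⟩ := hcomp v.2 (-u.2) (by linear_combination h) (by ring)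
    obtain ⟨hv1, hu1⟩ := hcomp v.1 (-u.1) (by ring)
      (by rw [show u.2 = 0 by omega, show v.2 = 0 from hv2]; ring)
    have := hcomp 1 0 (by rw [show u.1 = 0 by omega]; ring)
      (by rw [show u.2 = 0 by omega]; ring)
    exact one_ne_zero this.1
  set a : ℤ := v.2 - u.2 with hadef
  set b : ℤ := u.1 - v.1 with hbdef
  set f₀ : ℤ × ℤ → ℤ := fun x => (a * x.1 + b * x.2) / D with hf₀
  have hstep : ∀ w : ℤ × ℤ, a*w.1 + b*w.2 = D → ∀ x, f₀ (x + w) = f₀ x + 1 := by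
    intro w hw x
    have hrw : a * (x + w).1 + b * (x + w).2 = (a * x.1 + b * x.2) + 1 * D := by
      simp only [Prod.fst_add, Prod.snd_add]
      linear_combination hw
    simp only [hf₀]
    rw [hrw, Int.add_mul_ediv_right _ _ hD0]
  have hwu : a*u.1 + b*u.2 = D := by rw [hadef, hbdef, hDdef]; ring
  have hwv : a*v.1 + b*v.2 = D := by rw [hadef, hbdef, hDdef]; ring
  set X₀ : Set (ℤ × ℤ) := {x | Even (f₀ x)} with hX₀
  have hX₀P : X₀ ∈ P := by
    intro S hS
    have key : ∀ w : ℤ × ℤ, (∀ x, f₀ (x+w) = f₀ x + 1) → Hits2 X₀ {0, w} := by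
      intro w hw n
      by_cases h : Even (f₀ n)
      · exact ⟨0, Set.mem_insert _ _, by simpa [hX₀] using h⟩
      · refine ⟨w, Set.mem_insert_iff.mpr (Or.inr rfl), ?_⟩
        simp only [hX₀, Set.mem_setOf_eq, hw n, Int.even_add_one]
        exact h
    simp only [Set.mem_insert_iff, Set.mem_singleton_iff] at hS
    rcases hS with rfl | rfl
    · exact key u (hstep u hwu)
    · exact key v (hstep v hwv)
  have hflip : ∀ x ∈ X₀, x + u ∉ X₀ := by
    intro x hx hx'
    rw [hX₀, Set.mem_setOf_eq, hstep u hwu x, Int.even_add_one] at hx'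
    exact hx' hx
  -- Upper bound for the density of X₀
  have ld_le : lowerDensity2 X₀ ≤ 1/2 := by
    set f : ℕ → ℝ := fun N => ((X₀ ∩ box N).ncard : ℝ) / (2 * N + 1) ^ 2 with hf
    set g : ℕ → ℝ := fun N => (2*(N:ℝ)+1+(2*(M:ℝ)))^2 / (2*(2*(N:ℝ)+1)^2) with hg
    have hgt : Tendsto g atTop (𝓝 (1/2)) := tend_half _
    have hfg : ∀ N, f N ≤ g N := by
      intro N
      have hcount := count_upper u X₀ hflip N M hM1 hM2
      have hcast : 2 * ((X₀ ∩ box N).ncard : ℝ) ≤ (2*((N:ℝ)+(M:ℝ))+1)^2 := by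
        exact_mod_cast hcount
      have hpos := hbox_pos N
      rw [hf, hg, div_le_div_iff₀ hpos (by positivity)]
      nlinarith [hcast, sq_nonneg (2*(N:ℝ)+1)]
    rw [hdens X₀, ← hgt.liminf_eq]
    refine Filter.liminf_le_liminf (Filter.Eventually.of_forall hfg) ?_
      hgt.isCoboundedUnder_ge
    refine Filter.isBoundedUnder_of ⟨0, fun N => ?_⟩
    positivity
  -- Conclusion
  have hne : (lowerDensity2 '' P).Nonempty := ⟨lowerDensity2 X₀, Set.mem_image_of_mem _ hX₀P⟩
  have hlb : ∀ y ∈ lowerDensity2 '' P, 1/2 ≤ y := by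
    rintro y ⟨X, hX, rfl⟩
    exact ld_ge X hX
  have hpi : piercing2 {{0, u}, {0, v}} = sInf (lowerDensity2 '' P) := rfl
  rw [hpi]
  refine le_antisymm ?_ (le_csInf hne hlb)
  exact le_trans (csInf_le ⟨1/2, hlb⟩ (Set.mem_image_of_mem _ hX₀P)) ld_le
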